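/- Let H(x) = tanh(x/√2), and define L₄(t,x) = −(1 − (3/2)·sech²(x/√2))·sin(√2·t) and M₄(t,x) = tanh(x/√2)·cos(√2·t). Then (L₄, M₄) satisfies the linearized Bäcklund system for φ⁴: for all (t,x) ∈ ℝ², ∂_x L₄ − ∂_t M₄ = −√2·H(x)·L₄ and ∂_t L₄ − ∂_x M₄ = −√2·H(x)·M₄. (The even resonance of the φ⁴ kink and the odd resonance of the dual operator are linked by the linearized Bäcklund transformation.) -/

import Mathlib

/-- The φ⁴ kink. -/
noncomputable def phi4Kink (x : ℝ) : ℝ := Real.tanh (x / Real.sqrt 2)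

/-- The resonance L₄ of the φ⁴ kink. -/
noncomputable def L₄ (t x : ℝ) : ℝ :=
  -(1 - (3 / 2) * (1 / Real.cosh (x / Real.sqrt 2)) ^ 2) * Real.sin (Real.sqrt 2 * t)

/-- The resonance M₄ of the dual operator. -/
noncomputable def M₄ (t x : ℝ) : ℝ :=
  Real.tanh (x / Real.sqrt 2) * Real.cos (Real.sqrt 2 * t)

/-!
Since sech² = 1 − tanh², the profile of `L₄` is the polynomial `(3H² − 1)/2` in the kink `H`,
and the kink solves the Bogomolny equation `H' = (1 − H²)/√2`. Both Bäcklund equations then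
reduce, after the `t`-derivatives bring down the frequency `√2`, to polynomial identities in `H`
that hold for every solution of the Bogomolny equation.
-/

open Real

namespace Real

theorem one_div_cosh_sq (x : ℝ) : (1 / cosh x) ^ 2 = 1 - tanh x ^ 2 := by
  have hcosh : cosh x ≠ 0 := (cosh_pos x).ne'
  rw [tanh_eq_sinh_div_cosh]
  field_simp
  linear_combination -(cosh_sq_sub_sinh_sq x)

theorem hasDerivAt_tanh (x : ℝ) : HasDerivAt tanh (1 - tanh x ^ 2) x := by
  have hcosh : cosh x ≠ 0 := (cosh_pos x).ne'
  have hquot := (hasDerivAt_sinh x).div (hasDerivAt_cosh x) hcosh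
  rw [← one_div_cosh_sq, show tanh = sinh / cosh from funext tanh_eq_sinh_div_cosh]
  exact hquot.congr_deriv (by field_simp; linear_combination cosh_sq_sub_sinh_sq x)

end Real

theorem hasDerivAt_phi4Kink (x : ℝ) : HasDerivAt phi4Kink ((1 - phi4Kink x ^ 2) / √2) x :=
  ((hasDerivAt_tanh _).comp x ((hasDerivAt_id x).div_const √2)).congr_deriv
    (by rw [phi4Kink, id]; ring)

theorem L₄_eq (t x : ℝ) : L₄ t x = -((3 / 2) * phi4Kink x ^ 2 - 1 / 2) * sin (√2 * t) := by
  rw [L₄, phi4Kink, one_div_cosh_sq]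
  ring

theorem linearizedBacklund_of_bogomolny {H : ℝ → ℝ}
    (hH : ∀ x, HasDerivAt H ((1 - H x ^ 2) / √2) x) (t x : ℝ) :
    let L := fun t x => -((3 / 2) * H x ^ 2 - 1 / 2) * sin (√2 * t)
    let M := fun t x => H x * cos (√2 * t)
    deriv (fun x' => L t x') x - deriv (fun t' => M t' x) t = -√2 * H x * L t x
      ∧ deriv (fun t' => L t' x) t - deriv (fun x' => M t x') x = -√2 * H x * M t x := by
  intro L M
  have hfreq : HasDerivAt (fun t' => √2 * t') √2 t := by
    simpa using (hasDerivAt_id t).const_mul √2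
  have hLx : HasDerivAt (fun x' => L t x')
      (-(3 * H x * ((1 - H x ^ 2) / √2)) * sin (√2 * t)) x := by
    have := (((hH x).pow 2).const_mul (3 / 2 : ℝ)).sub_const (1 / 2 : ℝ)
    exact this.neg.mul_const _ |>.congr_deriv (by push_cast; ring)
  have hMt : HasDerivAt (fun t' => M t' x) (H x * (-sin (√2 * t) * √2)) t :=
    ((hasDerivAt_cos _).comp t hfreq).const_mul (H x)
  have hLt : HasDerivAt (fun t' => L t' x)
      (-((3 / 2) * H x ^ 2 - 1 / 2) * (cos (√2 * t) * √2)) t :=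
    ((hasDerivAt_sin _).comp t hfreq).const_mul _
  have hMx : HasDerivAt (fun x' => M t x') ((1 - H x ^ 2) / √2 * cos (√2 * t)) x :=
    (hH x).mul_const _
  have hsqrt : √2 ^ 2 = 2 := sq_sqrt zero_le_two
  rw [hLx.deriv, hMt.deriv, hLt.deriv, hMx.deriv]
  constructor
  · field_simp
    linear_combination (3 / 2) * (H x - H x ^ 3) * sin (√2 * t) * hsqrt
  · field_simp
    linear_combination (1 - H x ^ 2) * cos (√2 * t) * hsqrt

/-- (L₄, M₄) satisfies the linearized Bäcklund system for φ⁴: the even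
resonance of the φ⁴ kink and the odd resonance of the dual operator are linked by the
linearized Bäcklund transformation. -/
theorem phi4_resonances_linearized_backlund :
    ∀ t x : ℝ,
      deriv (fun x' => L₄ t x') x - deriv (fun t' => M₄ t' x) t
        = -Real.sqrt 2 * phi4Kink x * L₄ t x
      ∧ deriv (fun t' => L₄ t' x) t - deriv (fun x' => M₄ t x') x
        = -Real.sqrt 2 * phi4Kink x * M₄ t x := by
  intro t x
  have hL : L₄ = fun t x => -((3 / 2) * phi4Kink x ^ 2 - 1 / 2) * sin (√2 * t) :=
    funext fun t => funext (L₄_eq t)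
  rw [hL]
  exact linearizedBacklund_of_bogomolny hasDerivAt_phi4Kink t x
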